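/- Nonnegativity of conditional permutation importance under MSE: with ŷ(x,z) = E[Y|X=x,Z=z] and Xᶜ ~ law(X|Z) conditionally independent of (X,Y) given Z, E[(Y − ŷ(Xᶜ,Z))²] ≥ E[(Y − ŷ(X,Z))²], with equality if and only if ŷ(X,Z) = E[Y|Z] almost surely (i.e. Var(ŷ(X,Z)|Z) = 0 a.s.). -/

import Mathlib

/-! With `g = E[Y | Z]`, projecting `Y` onto `σ(X, Z)` gives
`E(Y - g)² = E(Y - ŷ(X,Z))² + E(ŷ(X,Z) - g)²`. Conditional independence makes
`E[Y | Z, Xᶜ] = g`, so projecting onto `σ(Z, Xᶜ)` gives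
`E(Y - ŷ(Xᶜ,Z))² = E(Y - g)² + E(g - ŷ(Xᶜ,Z))²`. Since `g` is a function of `Z` and `(Z, Xᶜ)` has
the law of `(Z, X)`, the last term is `E(ŷ(X,Z) - g)²`. Hence
`E(Y - ŷ(Xᶜ,Z))² = E(Y - ŷ(X,Z))² + 2 E(ŷ(X,Z) - g)²`. -/

open MeasureTheory ProbabilityTheory

section Projection

variable {α : Type*} {m m₀ : MeasurableSpace α} {μ : Measure α} {f h : α → ℝ}

lemma integral_mul_condExp_of_stronglyMeasurable (hm : m ≤ m₀) [SigmaFinite (μ.trim hm)]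
    (hh : StronglyMeasurable[m] h) (hhf : Integrable (h * f) μ) (hf : Integrable f μ) :
    ∫ x, h x * f x ∂μ = ∫ x, h x * μ[f | m] x ∂μ := by
  rw [← integral_condExp hm]
  exact integral_congr_ae (condExp_mul_of_stronglyMeasurable_left hh hhf hf)

lemma integral_sub_sq_eq_integral_sub_condExp_sq_add [IsFiniteMeasure μ] (hm : m ≤ m₀)
    (hf : MemLp f 2 μ) (hh : MemLp h 2 μ) (hhm : StronglyMeasurable[m] h) :
    ∫ x, (f x - h x) ^ 2 ∂μ
      = ∫ x, (f x - μ[f | m] x) ^ 2 ∂μ + ∫ x, (μ[f | m] x - h x) ^ 2 ∂μ := by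
  set g := μ[f | m]
  have hg : MemLp g 2 μ := hf.condExp one_le_two
  have hd : MemLp (g - h) 2 μ := hg.sub hh
  have hdf : Integrable (fun x => (g x - h x) * f x) μ := hd.integrable_mul hf
  have hdg : Integrable (fun x => (g x - h x) * g x) μ := hd.integrable_mul hg
  have hcross : ∫ x, (g x - h x) * (f x - g x) ∂μ = 0 := by
    simp_rw [mul_sub]
    rw [integral_sub hdf hdg, sub_eq_zero]
    exact integral_mul_condExp_of_stronglyMeasurable hm (stronglyMeasurable_condExp.sub hhm)
      hdf (hf.integrable one_le_two)
  have hsq : ∀ x, (f x - h x) ^ 2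
      = (f x - g x) ^ 2 + (g x - h x) ^ 2 + 2 * ((g x - h x) * (f x - g x)) := fun x => by ring
  have hfg : Integrable (fun x => (f x - g x) ^ 2) μ := (hf.sub hg).integrable_sq
  have hgh : Integrable (fun x => (g x - h x) ^ 2) μ := hd.integrable_sq
  have hprod : Integrable (fun x => (g x - h x) * (f x - g x)) μ := hd.integrable_mul (hf.sub hg)
  have hsum : Integrable (fun x => (f x - g x) ^ 2 + (g x - h x) ^ 2) μ := hfg.add hgh
  simp_rw [hsq]
  rw [integral_add hsum (hprod.const_mul 2), integral_add hfg hgh, integral_const_mul,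
    hcross, mul_zero, add_zero]

lemma integral_sub_sq_eq_zero_iff {g : α → ℝ} (hf : MemLp f 2 μ) (hg : MemLp g 2 μ) :
    ∫ x, (f x - g x) ^ 2 ∂μ = 0 ↔ f =ᵐ[μ] g := by
  have hfg : Integrable (fun x => (f x - g x) ^ 2) μ := (hf.sub hg).integrable_sq
  rw [integral_eq_zero_iff_of_nonneg (fun x => sq_nonneg _) hfg]
  refine Filter.eventually_congr (.of_forall fun x => ?_)
  simp [sub_eq_zero]

end Projection

namespace ProbabilityTheory

variable {Ω β γ δ : Type*} {mΩ : MeasurableSpace Ω} [MeasurableSpace β] [MeasurableSpace γ]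
  [MeasurableSpace δ] {μ : Measure Ω} {Z : Ω → δ}

lemma CondIndepFun.condExp_comp_ae_eq_condExp [IsFiniteMeasure μ] [StandardBorelSpace Ω]
    [StandardBorelSpace β] [Nonempty β] [StandardBorelSpace γ] [Nonempty γ]
    {E : Type*} [NormedAddCommGroup E] [NormedSpace ℝ E] [CompleteSpace E]
    {V : Ω → β} {W : Ω → γ} (hV : Measurable V) (hW : Measurable W) (hZ : Measurable Z)
    (hindep : W ⟂ᵢ[Z, hZ; μ] V) {F : β → E} (hF : StronglyMeasurable F)
    (hFV : Integrable (fun ω => F (V ω)) μ) :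
    μ[fun ω => F (V ω) | MeasurableSpace.comap (fun ω => (Z ω, W ω)) inferInstance]
      =ᵐ[μ] μ[fun ω => F (V ω) | MeasurableSpace.comap Z inferInstance] := by
  have hkernel : ∀ᵐ ω ∂μ, condDistrib V (fun ω => (Z ω, W ω)) μ (Z ω, W ω)
      = condDistrib V Z μ (Z ω) :=
    ae_of_ae_map (hZ.prodMk hW).aemeasurable
      ((condIndepFun_iff_condDistrib_prod_ae_eq_prodMkRight hV hW hZ).1 hindep)
  filter_upwards [condExp_ae_eq_integral_condDistrib (hZ.prodMk hW) hV.aemeasurable hF hFV,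
    condExp_ae_eq_integral_condDistrib hZ hV.aemeasurable hF hFV, hkernel] with ω h₁ h₂ h₃
  rw [h₁, h₂, h₃]

lemma identDistrib_prodMk_of_condDistrib_ae_eq [IsFiniteMeasure μ] [StandardBorelSpace β]
    [Nonempty β]    {X X' : Ω → β} (hX : Measurable X) (hX' : Measurable X') (hZ : Measurable Z)
    (hcopy : condDistrib X' Z μ =ᵐ[μ.map Z] condDistrib X Z μ) :
    IdentDistrib (fun ω => (Z ω, X' ω)) (fun ω => (Z ω, X ω)) μ μ where
  aemeasurable_fst := (hZ.prodMk hX').aemeasurable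
  aemeasurable_snd := (hZ.prodMk hX).aemeasurable
  map_eq := by
    rw [← compProd_map_condDistrib hX'.aemeasurable, ← compProd_map_condDistrib hX.aemeasurable,
      Measure.compProd_congr hcopy]

lemma IdentDistrib.integral_comp_prodMk_eq {X X' : Ω → β}
    (hid : IdentDistrib (fun ω => (Z ω, X' ω)) (fun ω => (Z ω, X ω)) μ μ)
    {g : Ω → ℝ} (hg : StronglyMeasurable[MeasurableSpace.comap Z inferInstance] g)
    {H : δ × β × ℝ → ℝ} (hH : Measurable H) :
    ∫ ω, H (Z ω, X' ω, g ω) ∂μ = ∫ ω, H (Z ω, X ω, g ω) ∂μ := by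
  obtain ⟨g', hg', rfl⟩ := hg.exists_eq_measurable_comp
  have hu : Measurable fun p : δ × β => H (p.1, p.2, g' p.1) :=
    hH.comp (measurable_fst.prodMk (measurable_snd.prodMk (hg'.measurable.comp measurable_fst)))
  exact (hid.comp hu).integral_eq

end ProbabilityTheory

theorem conditional_permutation_importance_nonneg_general
    {Ω 𝒳 𝒵 : Type*} [MeasurableSpace Ω] [StandardBorelSpace Ω]
    [MeasurableSpace 𝒳] [StandardBorelSpace 𝒳] [Nonempty 𝒳] [MeasurableSpace 𝒵]
    (P : Measure Ω) [IsProbabilityMeasure P]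
    (X XC : Ω → 𝒳) (Y : Ω → ℝ) (Z : Ω → 𝒵)
    (hX : Measurable X) (hXC : Measurable XC) (hY : Measurable Y) (hZ : Measurable Z)
    (hmZ : MeasurableSpace.comap Z inferInstance ≤ ‹MeasurableSpace Ω›)
    -- Xᶜ has the same conditional law as X given Z:
    (hcopy : condDistrib XC Z P =ᵐ[P.map Z] condDistrib X Z P)
    -- Xᶜ is conditionally independent of (X, Y) given Z:
    (hindep : CondIndepFun (MeasurableSpace.comap Z inferInstance) hmZ
      XC (fun ω => (X ω, Y ω)) P)
    (yhat : 𝒳 → 𝒵 → ℝ) (hyhatmeas : Measurable (Function.uncurry yhat))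
    -- ŷ(X,Z) is a version of the conditional expectation E[Y | X, Z]:
    (hyhat : (fun ω => yhat (X ω) (Z ω))
      =ᵐ[P] P[Y | MeasurableSpace.comap (fun ω => (X ω, Z ω)) inferInstance])
    (hY2 : MemLp Y 2 P)
    (hyhat2 : MemLp (fun ω => yhat (X ω) (Z ω)) 2 P)
    (hyhatC2 : MemLp (fun ω => yhat (XC ω) (Z ω)) 2 P) :
    (∫ ω, (Y ω - yhat (X ω) (Z ω)) ^ 2 ∂P) ≤ ∫ ω, (Y ω - yhat (XC ω) (Z ω)) ^ 2 ∂P ∧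
    ((∫ ω, (Y ω - yhat (XC ω) (Z ω)) ^ 2 ∂P) = (∫ ω, (Y ω - yhat (X ω) (Z ω)) ^ 2 ∂P) ↔
      (fun ω => yhat (X ω) (Z ω))
        =ᵐ[P] P[Y | MeasurableSpace.comap Z inferInstance]) := by
  set g := P[Y | MeasurableSpace.comap Z inferInstance]
  have hg2 : MemLp g 2 P := hY2.condExp one_le_two
  have hgZ : StronglyMeasurable[MeasurableSpace.comap Z inferInstance] g :=
    stronglyMeasurable_condExp
  have hXZ : Measurable[MeasurableSpace.comap (fun ω => (X ω, Z ω)) inferInstance] Z :=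
    measurable_snd.comp (comap_measurable _)
  have hZXC : Measurable[MeasurableSpace.comap (fun ω => (Z ω, XC ω)) inferInstance]
      (fun ω => (XC ω, Z ω)) := measurable_swap.comp (comap_measurable _)
  have hcondExp_ZXC : P[Y | MeasurableSpace.comap (fun ω => (Z ω, XC ω)) inferInstance] =ᵐ[P] g :=
    hindep.condExp_comp_ae_eq_condExp (hX.prodMk hY) hXC hZ measurable_snd.stronglyMeasurable
      (hY2.integrable one_le_two)
  have hproj_ZXC : ∫ ω, (Y ω - yhat (XC ω) (Z ω)) ^ 2 ∂P
      = ∫ ω, (Y ω - g ω) ^ 2 ∂P + ∫ ω, (g ω - yhat (XC ω) (Z ω)) ^ 2 ∂P := by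
    rw [integral_sub_sq_eq_integral_sub_condExp_sq_add (hZ.prodMk hXC).comap_le hY2 hyhatC2
      (hyhatmeas.comp hZXC).stronglyMeasurable]
    congr 1 <;> refine integral_congr_ae ?_ <;> filter_upwards [hcondExp_ZXC] with ω hω <;> rw [hω]
  have hproj_XZ : ∫ ω, (Y ω - g ω) ^ 2 ∂P
      = ∫ ω, (Y ω - yhat (X ω) (Z ω)) ^ 2 ∂P + ∫ ω, (yhat (X ω) (Z ω) - g ω) ^ 2 ∂P := by
    rw [integral_sub_sq_eq_integral_sub_condExp_sq_add (hX.prodMk hZ).comap_le hY2 hg2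
      (hgZ.mono hXZ.comap_le)]
    congr 1 <;> refine integral_congr_ae ?_ <;> filter_upwards [hyhat] with ω hω <;> rw [hω]
  have hsame_law :
      ∫ ω, (g ω - yhat (XC ω) (Z ω)) ^ 2 ∂P = ∫ ω, (yhat (X ω) (Z ω) - g ω) ^ 2 ∂P := by
    have hH : Measurable fun p : 𝒵 × 𝒳 × ℝ => (yhat p.2.1 p.1 - p.2.2) ^ 2 :=
      ((hyhatmeas.comp (measurable_snd.fst.prodMk measurable_fst)).sub
        measurable_snd.snd).pow_const 2
    have hid := identDistrib_prodMk_of_condDistrib_ae_eq hX hXC hZ hcopy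
    rw [← hid.integral_comp_prodMk_eq hgZ hH]
    exact integral_congr_ae (.of_forall fun ω => sub_sq_comm _ _)
  have hgap_nonneg : 0 ≤ ∫ ω, (yhat (X ω) (Z ω) - g ω) ^ 2 ∂P :=
    integral_nonneg fun ω => sq_nonneg _
  refine ⟨by linarith, ?_⟩
  rw [← integral_sub_sq_eq_zero_iff hyhat2 hg2]
  constructor <;> intro h <;> linarith

/-- Nonnegativity of conditional permutation importance under MSE:
`E[(Y − ŷ(Xᶜ,Z))²] ≥ E[(Y − ŷ(X,Z))²]`, with equality if and only if
`ŷ(X,Z) = E[Y|Z]` almost surely. -/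
theorem conditional_permutation_importance_nonneg
    {Ω 𝒳 𝒵 : Type*} [MeasurableSpace Ω] [StandardBorelSpace Ω] [Nonempty Ω]
    [MeasurableSpace 𝒳] [StandardBorelSpace 𝒳] [Nonempty 𝒳] [MeasurableSpace 𝒵]
    (P : Measure Ω) [IsProbabilityMeasure P]
    (X XC : Ω → 𝒳) (Y : Ω → ℝ) (Z : Ω → 𝒵)
    (hX : Measurable X) (hXC : Measurable XC) (hY : Measurable Y) (hZ : Measurable Z)
    (hmZ : MeasurableSpace.comap Z inferInstance ≤ ‹MeasurableSpace Ω›)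
    -- Xᶜ has the same conditional law as X given Z:
    (hcopy : condDistrib XC Z P =ᵐ[P.map Z] condDistrib X Z P)
    -- Xᶜ is conditionally independent of (X, Y) given Z:
    (hindep : CondIndepFun (MeasurableSpace.comap Z inferInstance) hmZ
      XC (fun ω => (X ω, Y ω)) P)
    (yhat : 𝒳 → 𝒵 → ℝ) (hyhatmeas : Measurable (Function.uncurry yhat))
    -- ŷ(X,Z) is a version of the conditional expectation E[Y | X, Z]:
    (hyhat : (fun ω => yhat (X ω) (Z ω))
      =ᵐ[P] P[Y | MeasurableSpace.comap (fun ω => (X ω, Z ω)) inferInstance])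
    (hY2 : MemLp Y 2 P)
    (hyhat2 : MemLp (fun ω => yhat (X ω) (Z ω)) 2 P)
    (hyhatC2 : MemLp (fun ω => yhat (XC ω) (Z ω)) 2 P) :
    (∫ ω, (Y ω - yhat (X ω) (Z ω)) ^ 2 ∂P) ≤ ∫ ω, (Y ω - yhat (XC ω) (Z ω)) ^ 2 ∂P ∧
    ((∫ ω, (Y ω - yhat (XC ω) (Z ω)) ^ 2 ∂P) = (∫ ω, (Y ω - yhat (X ω) (Z ω)) ^ 2 ∂P) ↔
      (fun ω => yhat (X ω) (Z ω))
        =ᵐ[P] P[Y | MeasurableSpace.comap Z inferInstance]) :=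
  conditional_permutation_importance_nonneg_general P X XC Y Z hX hXC hY hZ hmZ hcopy hindep yhat
    hyhatmeas hyhat hY2 hyhat2 hyhatC2
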